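/- arXiv:2407.01450 — 3 statements merged into one kernel-verified Lean document; each statement's English description precedes it below -/
import Mathlib

section
/- In type B_n (n ≥ 2), the vectors w₁ = v₁⊗v₁, w₂ = v₁⊗v₂ − r² v₂⊗v₁, and w₃ = Σ_{i=1}^{n} r^{2(i−1)} v_i⊗v_{i'} + r^{2n−1}s^{−1} v_{n+1}⊗v_{n+1} + Σ_{i=1}^{n} r^{2n−1}s^{2(i−n)−1} v_{i'}⊗v_i are highest weight vectors: for every 1 ≤ i ≤ n, the operator Δe_i := e_i ⊗ Id + ω_i ⊗ e_i on V ⊗ V annihilates w₁, w₂, and w₃. -/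
/-!
`Δe_i` sends `v_a ⊗ v_b` to `e_i v_a ⊗ v_b + ω_i v_a ⊗ e_i v_b`, where `ω_i` is diagonal and
`e_i` kills every basis vector except `v_{i+1} ↦ v_i` and `v_{i'} ↦ -v_{(i+1)'}`. So only the
terms of `w` with a tensor factor `v_{i+1}` or `v_{i'}` contribute. There are none in `w₁`; in
`w₂` they occur only for `i = 1`, where `ω_1 v_1 = r² v_1` cancels the coefficient `-r²`. In `w₃`
they are the terms with `k ∈ {i, i+1}` (for `i = n`: `k = n` and the middle term), and they
cancel in pairs because consecutive coefficients of `w₃` differ exactly by the weights `r²`,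
`s⁻²` of `ω_i` (by `r s⁻¹` for `ω_n`).
-/

open Finset Matrix Kronecker

namespace TwoParamQG

variable {K : Type*} [Field K]

/-- The `N × N` matrix unit `E_{i j}` (with 1-based indices `i, j`). -/
def Eu (N i j : ℕ) : Matrix (Fin N) (Fin N) K :=
  Matrix.of fun a b => if ((a : ℕ) + 1 = i ∧ (b : ℕ) + 1 = j) then (1 : K) else 0

/-- Standard basis vector `v_i` of `K^N` (1-based index `i`). -/
def bv (N i : ℕ) : Fin N → K := fun a => if (a : ℕ) + 1 = i then (1 : K) else 0

/-- The tensor `v_i ⊗ v_j` in `K^N ⊗ K^N`. -/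
def bvv (N i j : ℕ) : Fin N × Fin N → K := fun p => bv N i p.1 * bv N j p.2

/-- `i ↦ i' = N + 1 - i` for `N = 2n + 1` (type `B_n`). -/
def pB (n i : ℕ) : ℕ := 2 * n + 2 - i

/-- Type `B_n` generator matrix `e_i` on `K^{2n+1}`. -/
def eB (n i : ℕ) : Matrix (Fin (2 * n + 1)) (Fin (2 * n + 1)) K :=
  Eu (2 * n + 1) i (i + 1) - Eu (2 * n + 1) (pB n (i + 1)) (pB n i)

/-- Type `B_n` generator matrix `f_i` on `K^{2n+1}`. -/
def fB (n : ℕ) (r s : K) (i : ℕ) : Matrix (Fin (2 * n + 1)) (Fin (2 * n + 1)) K :=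
  if i = n then
    (r⁻¹ + s⁻¹) • (Eu (2 * n + 1) (n + 1) n - Eu (2 * n + 1) (pB n n) (n + 1))
  else
    Eu (2 * n + 1) (i + 1) i - ((r * s) ^ (-2 : ℤ)) • Eu (2 * n + 1) (pB n i) (pB n (i + 1))

/-- Type `B_n` generator matrix `ω_i` on `K^{2n+1}`. -/
def ωB (n : ℕ) (r s : K) (i : ℕ) : Matrix (Fin (2 * n + 1)) (Fin (2 * n + 1)) K :=
  if i = n then
    (r * s⁻¹) • Eu (2 * n + 1) n n + Eu (2 * n + 1) (n + 1) (n + 1)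
      + (r⁻¹ * s) • Eu (2 * n + 1) (pB n n) (pB n n)
      + (∑ j ∈ Finset.Icc 1 (n - 1),
          ((r⁻¹ * s⁻¹) • Eu (2 * n + 1) j j + (r * s) • Eu (2 * n + 1) (pB n j) (pB n j)))
  else
    (r ^ 2) • Eu (2 * n + 1) i i + (s ^ 2) • Eu (2 * n + 1) (i + 1) (i + 1)
      + (r ^ (-2 : ℤ)) • Eu (2 * n + 1) (pB n i) (pB n i)
      + (s ^ (-2 : ℤ)) • Eu (2 * n + 1) (pB n (i + 1)) (pB n (i + 1))
      + (∑ j ∈ (Finset.Icc 1 n).filter (fun j => j ≠ i ∧ j ≠ i + 1),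
          (Eu (2 * n + 1) j j + Eu (2 * n + 1) (pB n j) (pB n j)))
      + Eu (2 * n + 1) (n + 1) (n + 1)

/-- Type `B_n` generator matrix `ω'_i` on `K^{2n+1}`. -/
def ω'B (n : ℕ) (r s : K) (i : ℕ) : Matrix (Fin (2 * n + 1)) (Fin (2 * n + 1)) K :=
  if i = n then
    (r⁻¹ * s) • Eu (2 * n + 1) n n + Eu (2 * n + 1) (n + 1) (n + 1)
      + (r * s⁻¹) • Eu (2 * n + 1) (pB n n) (pB n n)
      + (∑ j ∈ Finset.Icc 1 (n - 1),
          ((r⁻¹ * s⁻¹) • Eu (2 * n + 1) j j + (r * s) • Eu (2 * n + 1) (pB n j) (pB n j)))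
  else
    (s ^ 2) • Eu (2 * n + 1) i i + (r ^ 2) • Eu (2 * n + 1) (i + 1) (i + 1)
      + (s ^ (-2 : ℤ)) • Eu (2 * n + 1) (pB n i) (pB n i)
      + (r ^ (-2 : ℤ)) • Eu (2 * n + 1) (pB n (i + 1)) (pB n (i + 1))
      + (∑ j ∈ (Finset.Icc 1 n).filter (fun j => j ≠ i ∧ j ≠ i + 1),
          (Eu (2 * n + 1) j j + Eu (2 * n + 1) (pB n j) (pB n j)))
      + Eu (2 * n + 1) (n + 1) (n + 1)

section Tensor

variable {R : Type*} [CommSemiring R] {m n : Type*}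

def tmulVec : (m → R) →ₗ[R] (n → R) →ₗ[R] (m × n → R) :=
  LinearMap.mk₂ R (fun x y p => x p.1 * y p.2)
    (fun _ _ _ => funext fun _ => add_mul _ _ _)
    (fun _ _ _ => funext fun _ => mul_assoc _ _ _)
    (fun _ _ _ => funext fun _ => mul_add _ _ _)
    (fun _ _ _ => funext fun _ => mul_left_comm _ _ _)

theorem tmulVec_apply (x : m → R) (y : n → R) (p : m × n) : tmulVec x y p = x p.1 * y p.2 :=
  rfl

theorem kronecker_mulVec_tmulVec [Fintype m] [Fintype n] (A : Matrix m m R) (B : Matrix n n R)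
    (x : m → R) (y : n → R) : (A ⊗ₖ B) *ᵥ tmulVec x y = tmulVec (A *ᵥ x) (B *ᵥ y) := by
  funext ⟨a, b⟩
  simp only [mulVec, dotProduct, kroneckerMap_apply, tmulVec_apply, Fintype.sum_prod_type,
    Finset.sum_mul_sum]
  exact Finset.sum_congr rfl fun _ _ => Finset.sum_congr rfl fun _ _ => by ring

end Tensor

section MatrixUnits

variable {N : ℕ}

theorem bvv_eq_tmulVec (a b : ℕ) : (bvv N a b : Fin N × Fin N → K) = tmulVec (bv N a) (bv N b) :=
  rfl

theorem Eu_mulVec_bv_of_ne {a b j : ℕ} (h : b ≠ j) :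
    (Eu N a b : Matrix (Fin N) (Fin N) K) *ᵥ bv N j = 0 := by
  funext x
  simp only [mulVec, dotProduct]
  refine Finset.sum_eq_zero fun c _ => ?_
  simp only [Eu, bv, of_apply]
  split_ifs <;> first | omega | simp

theorem Eu_mulVec_bv_self {a b : ℕ} (hb1 : 1 ≤ b) (hb2 : b ≤ N) :
    (Eu N a b : Matrix (Fin N) (Fin N) K) *ᵥ bv N b = bv N a := by
  funext x
  simp only [mulVec, dotProduct, Eu, bv, of_apply]
  rw [Finset.sum_eq_single ⟨b - 1, by omega⟩]
  · simp [show b - 1 + 1 = b by omega]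
  · intro c _ hc
    have : (c : ℕ) + 1 ≠ b := fun h => hc (Fin.ext (by simp; omega))
    simp [this]
  · simp

end MatrixUnits

def coprodE (n : ℕ) (r s : K) (i : ℕ) :
    Matrix (Fin (2 * n + 1) × Fin (2 * n + 1)) (Fin (2 * n + 1) × Fin (2 * n + 1)) K :=
  eB n i ⊗ₖ 1 + ωB n r s i ⊗ₖ eB n i

def wB₃ (n : ℕ) (r s : K) : Fin (2 * n + 1) × Fin (2 * n + 1) → K :=
  (∑ k ∈ Finset.Icc 1 n, (r ^ (2 * (k - 1))) • bvv (2 * n + 1) k (pB n k))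
    + (r ^ (2 * n - 1) * s⁻¹) • bvv (2 * n + 1) (n + 1) (n + 1)
    + (∑ k ∈ Finset.Icc 1 n,
        (r ^ (2 * n - 1) * s ^ (2 * (k : ℤ) - 2 * (n : ℤ) - 1)) • bvv (2 * n + 1) (pB n k) k)

section TypeB

variable {n i : ℕ}

local notation "V" => Fin (2 * n + 1) → K

theorem eB_mulVec_bv_of_ne {j : ℕ} (h1 : j ≠ i + 1) (h2 : j ≠ pB n i) :
    (eB n i *ᵥ bv (2 * n + 1) j : V) = 0 := by
  rw [eB, sub_mulVec, Eu_mulVec_bv_of_ne h1.symm, Eu_mulVec_bv_of_ne h2.symm, sub_zero]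

theorem eB_mulVec_bv_succ (hi2 : i ≤ n) :
    (eB n i *ᵥ bv (2 * n + 1) (i + 1) : V) = bv (2 * n + 1) i := by
  rw [eB, sub_mulVec, Eu_mulVec_bv_self (by omega) (by omega),
    Eu_mulVec_bv_of_ne (by unfold pB; omega), sub_zero]

theorem eB_mulVec_bv_pB (hi1 : 1 ≤ i) (hi2 : i ≤ n) :
    (eB n i *ᵥ bv (2 * n + 1) (pB n i) : V) = -bv (2 * n + 1) (pB n (i + 1)) := by
  rw [eB, sub_mulVec, Eu_mulVec_bv_of_ne (by unfold pB; omega),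
    Eu_mulVec_bv_self (by unfold pB; omega) (by unfold pB; omega), zero_sub]

variable {r s : K}

theorem ωB_mulVec_bv_self_of_lt (hi1 : 1 ≤ i) (hin : i < n) :
    (ωB n r s i *ᵥ bv (2 * n + 1) i : V) = r ^ 2 • bv (2 * n + 1) i := by
  rw [ωB, if_neg hin.ne]
  simp only [pB, add_mulVec, smul_mulVec, sum_mulVec]
  rw [Finset.sum_eq_zero fun j hj => ?_]
  · simp (disch := omega) [Eu_mulVec_bv_self, Eu_mulVec_bv_of_ne]
  · simp only [Finset.mem_filter, Finset.mem_Icc] at hj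
    simp (disch := omega) [Eu_mulVec_bv_of_ne]

theorem ωB_mulVec_bv_pB_succ_of_lt (hin : i < n) :
    (ωB n r s i *ᵥ bv (2 * n + 1) (pB n (i + 1)) : V) =
      s ^ (-2 : ℤ) • bv (2 * n + 1) (pB n (i + 1)) := by
  rw [ωB, if_neg hin.ne]
  simp only [pB, add_mulVec, smul_mulVec, sum_mulVec]
  rw [Finset.sum_eq_zero fun j hj => ?_]
  · simp (disch := omega) [Eu_mulVec_bv_self, Eu_mulVec_bv_of_ne]
  · simp only [Finset.mem_filter, Finset.mem_Icc] at hj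
    simp (disch := omega) [Eu_mulVec_bv_of_ne]

theorem ωB_n_mulVec_bv_n (hn : 1 ≤ n) :
    (ωB n r s n *ᵥ bv (2 * n + 1) n : V) = (r * s⁻¹) • bv (2 * n + 1) n := by
  rw [ωB, if_pos rfl]
  simp only [pB, add_mulVec, smul_mulVec, sum_mulVec]
  rw [Finset.sum_eq_zero fun j hj => ?_]
  · simp (disch := omega) [Eu_mulVec_bv_self, Eu_mulVec_bv_of_ne]
  · simp only [Finset.mem_Icc] at hj
    simp (disch := omega) [Eu_mulVec_bv_of_ne]

theorem ωB_n_mulVec_bv_succ_n :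
    (ωB n r s n *ᵥ bv (2 * n + 1) (n + 1) : V) = bv (2 * n + 1) (n + 1) := by
  rw [ωB, if_pos rfl]
  simp only [pB, add_mulVec, smul_mulVec, sum_mulVec]
  rw [Finset.sum_eq_zero fun j hj => ?_]
  · simp (disch := omega) [Eu_mulVec_bv_self, Eu_mulVec_bv_of_ne]
  · simp only [Finset.mem_Icc] at hj
    simp (disch := omega) [Eu_mulVec_bv_of_ne]

theorem coprodE_mulVec_tmulVec (x y : V) :
    coprodE n r s i *ᵥ tmulVec x y =
      tmulVec (eB n i *ᵥ x) y + tmulVec (ωB n r s i *ᵥ x) (eB n i *ᵥ y) := by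
  rw [coprodE, add_mulVec, kronecker_mulVec_tmulVec, kronecker_mulVec_tmulVec, one_mulVec]

theorem coprodE_mulVec_bvv_of_ne {a b : ℕ} (ha1 : a ≠ i + 1) (ha2 : a ≠ pB n i)
    (hb1 : b ≠ i + 1) (hb2 : b ≠ pB n i) : coprodE n r s i *ᵥ bvv (2 * n + 1) a b = 0 := by
  rw [bvv_eq_tmulVec, coprodE_mulVec_tmulVec, eB_mulVec_bv_of_ne ha1 ha2,
    eB_mulVec_bv_of_ne hb1 hb2, map_zero, map_zero, LinearMap.zero_apply, add_zero]

theorem coprodE_mulVec_w₂ (hn : 2 ≤ n) (hi1 : 1 ≤ i) (hi2 : i ≤ n) :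
    coprodE n r s i *ᵥ (bvv (2 * n + 1) 1 2 - r ^ 2 • bvv (2 * n + 1) 2 1) = 0 := by
  rw [mulVec_sub, mulVec_smul]
  rcases eq_or_ne i 1 with rfl | hi
  · have he₁ : (eB n 1 *ᵥ bv (2 * n + 1) 1 : V) = 0 :=
      eB_mulVec_bv_of_ne (by omega) (by unfold pB; omega)
    have he₂ : (eB n 1 *ᵥ bv (2 * n + 1) 2 : V) = bv (2 * n + 1) 1 :=
      eB_mulVec_bv_succ (by omega)
    simp only [bvv_eq_tmulVec, coprodE_mulVec_tmulVec, he₁, he₂,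
      ωB_mulVec_bv_self_of_lt le_rfl (by omega : 1 < n), map_zero, LinearMap.zero_apply,
      map_smul, LinearMap.smul_apply, zero_add, add_zero, sub_self]
  · rw [coprodE_mulVec_bvv_of_ne, coprodE_mulVec_bvv_of_ne, smul_zero, sub_zero] <;>
      first | omega | (unfold pB; omega)

theorem coprodE_mulVec_smul_bvv_of_ne (c : K) {a b : ℕ} (ha1 : a ≠ i + 1) (ha2 : a ≠ pB n i)
    (hb1 : b ≠ i + 1) (hb2 : b ≠ pB n i) : coprodE n r s i *ᵥ (c • bvv (2 * n + 1) a b) = 0 := by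
  rw [mulVec_smul, coprodE_mulVec_bvv_of_ne ha1 ha2 hb1 hb2, smul_zero]

theorem coprodE_mulVec_wB₃_of_lt (hs : s ≠ 0) (hi1 : 1 ≤ i) (hin : i < n) :
    coprodE n r s i *ᵥ wB₃ n r s = 0 := by
  have hi : i ∈ Finset.Icc 1 n := Finset.mem_Icc.2 ⟨hi1, hin.le⟩
  have hi' : i + 1 ∈ Finset.Icc 1 n := Finset.mem_Icc.2 ⟨by omega, hin⟩
  rw [wB₃, mulVec_add, mulVec_add, mulVec_sum, mulVec_sum,
    Finset.sum_eq_add_of_mem i (i + 1) hi hi' (by omega) fun k hk hki => by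
      rw [Finset.mem_Icc] at hk
      exact coprodE_mulVec_smul_bvv_of_ne _ (by omega) (by unfold pB; omega)
        (by unfold pB; omega) (by unfold pB; omega),
    Finset.sum_eq_add_of_mem i (i + 1) hi hi' (by omega) fun k hk hki => by
      rw [Finset.mem_Icc] at hk
      exact coprodE_mulVec_smul_bvv_of_ne _ (by unfold pB; omega) (by unfold pB; omega)
        (by omega) (by unfold pB; omega),
    coprodE_mulVec_smul_bvv_of_ne (a := n + 1) (b := n + 1) _ (by omega) (by unfold pB; omega)
      (by omega) (by unfold pB; omega), add_zero]
  have he₁ : (eB n i *ᵥ bv (2 * n + 1) i : V) = 0 :=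
    eB_mulVec_bv_of_ne (by omega) (by unfold pB; omega)
  have he₂ : (eB n i *ᵥ bv (2 * n + 1) (pB n (i + 1)) : V) = 0 :=
    eB_mulVec_bv_of_ne (by unfold pB; omega) (by unfold pB; omega)
  have hr : r ^ (2 * (i + 1 - 1)) = r ^ (2 * (i - 1)) * r ^ 2 := by
    rw [← pow_add]; congr 1; omega
  have hs : s ^ (2 * ((i + 1 : ℕ) : ℤ) - 2 * n - 1) * s ^ (-2 : ℤ) =
      s ^ (2 * (i : ℤ) - 2 * n - 1) := by
    rw [← zpow_add₀ hs]; congr 1; push_cast; ring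
  simp only [mulVec_smul, bvv_eq_tmulVec, coprodE_mulVec_tmulVec, he₁, he₂,
    eB_mulVec_bv_succ hin.le, eB_mulVec_bv_pB hi1 hin.le, ωB_mulVec_bv_self_of_lt hi1 hin,
    ωB_mulVec_bv_pB_succ_of_lt hin, map_zero, LinearMap.zero_apply, map_smul,
    LinearMap.smul_apply, map_neg, LinearMap.neg_apply]
  rw [hr, ← hs]
  module

theorem coprodE_mulVec_wB₃_n (hn : 1 ≤ n) : coprodE n r s n *ᵥ wB₃ n r s = 0 := by
  have hmem : n ∈ Finset.Icc 1 n := Finset.mem_Icc.2 ⟨hn, le_rfl⟩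
  rw [wB₃, mulVec_add, mulVec_add, mulVec_sum, mulVec_sum,
    Finset.sum_eq_single_of_mem n hmem fun k hk hkn => by
      rw [Finset.mem_Icc] at hk
      exact coprodE_mulVec_smul_bvv_of_ne _ (by omega) (by unfold pB; omega)
        (by unfold pB; omega) (by unfold pB; omega),
    Finset.sum_eq_single_of_mem n hmem fun k hk hkn => by
      rw [Finset.mem_Icc] at hk
      exact coprodE_mulVec_smul_bvv_of_ne _ (by unfold pB; omega) (by unfold pB; omega)
        (by omega) (by unfold pB; omega)]
  have hmid : pB n (n + 1) = n + 1 := by unfold pB; omega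
  have he : (eB n n *ᵥ bv (2 * n + 1) n : V) = 0 :=
    eB_mulVec_bv_of_ne (by omega) (by unfold pB; omega)
  have hr : r ^ (2 * (n - 1)) * r = r ^ (2 * n - 1) := by
    rw [← pow_succ]; congr 1; omega
  have hs : s ^ (2 * (n : ℤ) - 2 * n - 1) = s⁻¹ := by
    rw [show 2 * (n : ℤ) - 2 * n - 1 = -1 by ring, _root_.zpow_neg_one]
  simp only [mulVec_smul, bvv_eq_tmulVec, coprodE_mulVec_tmulVec, he,
    eB_mulVec_bv_succ le_rfl, eB_mulVec_bv_pB hn le_rfl, hmid, ωB_n_mulVec_bv_n hn,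
    ωB_n_mulVec_bv_succ_n, map_zero, LinearMap.zero_apply, map_smul,
    LinearMap.smul_apply, map_neg, LinearMap.neg_apply]
  rw [← hr, hs]
  module

end TypeB

theorem typeB_highest_weight_vectors_general
    (n : ℕ) (hn : 2 ≤ n) (r s : K) (hs : s ≠ 0)
    (i : ℕ) (hi1 : 1 ≤ i) (hi2 : i ≤ n) :
    (eB n i ⊗ₖ (1 : Matrix (Fin (2 * n + 1)) (Fin (2 * n + 1)) K)
        + ωB n r s i ⊗ₖ eB n i).mulVec (bvv (2 * n + 1) 1 1) = 0 ∧
    (eB n i ⊗ₖ (1 : Matrix (Fin (2 * n + 1)) (Fin (2 * n + 1)) K)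
        + ωB n r s i ⊗ₖ eB n i).mulVec
        (bvv (2 * n + 1) 1 2 - (r ^ 2) • bvv (2 * n + 1) 2 1) = 0 ∧
    (eB n i ⊗ₖ (1 : Matrix (Fin (2 * n + 1)) (Fin (2 * n + 1)) K)
        + ωB n r s i ⊗ₖ eB n i).mulVec
        ((∑ k ∈ Finset.Icc 1 n, (r ^ (2 * (k - 1))) • bvv (2 * n + 1) k (pB n k))
          + (r ^ (2 * n - 1) * s⁻¹) • bvv (2 * n + 1) (n + 1) (n + 1)
          + (∑ k ∈ Finset.Icc 1 n,
              (r ^ (2 * n - 1) * s ^ (2 * (k : ℤ) - 2 * (n : ℤ) - 1)) •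
                bvv (2 * n + 1) (pB n k) k)) = 0 := by
  refine ⟨coprodE_mulVec_bvv_of_ne (by omega) (by unfold pB; omega) (by omega)
    (by unfold pB; omega), coprodE_mulVec_w₂ hn hi1 hi2, ?_⟩
  rcases hi2.lt_or_eq with hin | rfl
  · exact coprodE_mulVec_wB₃_of_lt hs hi1 hin
  · exact coprodE_mulVec_wB₃_n hi1

theorem typeB_highest_weight_vectors
    (n : ℕ) (hn : 2 ≤ n) (r s : K) (hr : r ≠ 0) (hs : s ≠ 0) (hrs : r ^ 2 ≠ s ^ 2)
    (i : ℕ) (hi1 : 1 ≤ i) (hi2 : i ≤ n) :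
    (eB n i ⊗ₖ (1 : Matrix (Fin (2 * n + 1)) (Fin (2 * n + 1)) K)
        + ωB n r s i ⊗ₖ eB n i).mulVec (bvv (2 * n + 1) 1 1) = 0 ∧
    (eB n i ⊗ₖ (1 : Matrix (Fin (2 * n + 1)) (Fin (2 * n + 1)) K)
        + ωB n r s i ⊗ₖ eB n i).mulVec
        (bvv (2 * n + 1) 1 2 - (r ^ 2) • bvv (2 * n + 1) 2 1) = 0 ∧
    (eB n i ⊗ₖ (1 : Matrix (Fin (2 * n + 1)) (Fin (2 * n + 1)) K)
        + ωB n r s i ⊗ₖ eB n i).mulVec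
        ((∑ k ∈ Finset.Icc 1 n, (r ^ (2 * (k - 1))) • bvv (2 * n + 1) k (pB n k))
          + (r ^ (2 * n - 1) * s⁻¹) • bvv (2 * n + 1) (n + 1) (n + 1)
          + (∑ k ∈ Finset.Icc 1 n,
              (r ^ (2 * n - 1) * s ^ (2 * (k : ℤ) - 2 * (n : ℤ) - 1)) •
                bvv (2 * n + 1) (pB n k) k)) = 0 :=
  typeB_highest_weight_vectors_general n hn r s hs i hi1 hi2

end TwoParamQG
end

section
/- In type D_n (n ≥ 2), the vectors w₁ = v₁⊗v₁, w₂ = v₁⊗v₂ − r v₂⊗v₁, and w₃ = Σ_{i=1}^{n} (r^{i−1} v_i⊗v_{i'} + r^{n−1} s^{i−n} v_{i'}⊗v_i) are highest weight vectors: for every 1 ≤ i ≤ n, the operator Δe_i := e_i ⊗ Id + ω_i ⊗ e_i on V ⊗ V annihilates w₁, w₂, and w₃. -/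
open Finset Matrix Kronecker

namespace TwoParamQG

variable {K : Type*} [Field K]

/-- `i ↦ i' = N + 1 - i` for `N = 2n` (type `D_n`). -/
def pD (n i : ℕ) : ℕ := 2 * n + 1 - i

/-- Type `D_n` generator matrix `e_i` on `K^{2n}`. -/
def eD (n : ℕ) (r s : K) (i : ℕ) : Matrix (Fin (2 * n)) (Fin (2 * n)) K :=
  if i = n then (r * s)⁻¹ • Eu (2 * n) (n - 1) (pD n n) - Eu (2 * n) n (pD n (n - 1))
  else Eu (2 * n) i (i + 1) - Eu (2 * n) (pD n (i + 1)) (pD n i)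

/-- Type `D_n` generator matrix `f_i` on `K^{2n}`. -/
def fD (n : ℕ) (r s : K) (i : ℕ) : Matrix (Fin (2 * n)) (Fin (2 * n)) K :=
  if i = n then Eu (2 * n) (pD n n) (n - 1) - Eu (2 * n) (pD n (n - 1)) n
  else Eu (2 * n) (i + 1) i - (r * s)⁻¹ • Eu (2 * n) (pD n i) (pD n (i + 1))

/-- Type `D_n` generator matrix `ω_i` on `K^{2n}`. -/
def ωD (n : ℕ) (r s : K) (i : ℕ) : Matrix (Fin (2 * n)) (Fin (2 * n)) K :=
  if i = n then
    s⁻¹ • Eu (2 * n) (n - 1) (n - 1) + r • Eu (2 * n) n n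
      + s • Eu (2 * n) (pD n (n - 1)) (pD n (n - 1)) + r⁻¹ • Eu (2 * n) (pD n n) (pD n n)
      + (∑ j ∈ Finset.Icc 1 (n - 2),
          ((r⁻¹ * s⁻¹) • Eu (2 * n) j j + (r * s) • Eu (2 * n) (pD n j) (pD n j)))
  else
    r • Eu (2 * n) i i + s • Eu (2 * n) (i + 1) (i + 1)
      + r⁻¹ • Eu (2 * n) (pD n i) (pD n i) + s⁻¹ • Eu (2 * n) (pD n (i + 1)) (pD n (i + 1))
      + (∑ j ∈ (Finset.Icc 1 n).filter (fun j => j ≠ i ∧ j ≠ i + 1),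
          (Eu (2 * n) j j + Eu (2 * n) (pD n j) (pD n j)))

/-- Type `D_n` generator matrix `ω'_i` on `K^{2n}`. -/
def ω'D (n : ℕ) (r s : K) (i : ℕ) : Matrix (Fin (2 * n)) (Fin (2 * n)) K :=
  if i = n then
    r⁻¹ • Eu (2 * n) (n - 1) (n - 1) + s • Eu (2 * n) n n
      + r • Eu (2 * n) (pD n (n - 1)) (pD n (n - 1)) + s⁻¹ • Eu (2 * n) (pD n n) (pD n n)
      + (∑ j ∈ Finset.Icc 1 (n - 2),
          ((r⁻¹ * s⁻¹) • Eu (2 * n) j j + (r * s) • Eu (2 * n) (pD n j) (pD n j)))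
  else
    s • Eu (2 * n) i i + r • Eu (2 * n) (i + 1) (i + 1)
      + s⁻¹ • Eu (2 * n) (pD n i) (pD n i) + r⁻¹ • Eu (2 * n) (pD n (i + 1)) (pD n (i + 1))
      + (∑ j ∈ (Finset.Icc 1 n).filter (fun j => j ≠ i ∧ j ≠ i + 1),
          (Eu (2 * n) j j + Eu (2 * n) (pD n j) (pD n j)))


lemma Eu_mulVec_ne (N a b j : ℕ) (h : b ≠ j) :
    (Eu N a b : Matrix (Fin N) (Fin N) K).mulVec (bv N j) = 0 := by
  funext x
  simp only [Matrix.mulVec, dotProduct, Eu, bv, Matrix.of_apply, Pi.zero_apply]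
  apply Finset.sum_eq_zero
  intro y _
  by_cases h1 : (y:ℕ)+1 = b <;> by_cases h2 : (y:ℕ)+1 = j <;> simp_all <;> omega

lemma Eu_mulVec_eq (N a j : ℕ) (h1 : 1 ≤ j) (h2 : j ≤ N) :
    (Eu N a j : Matrix (Fin N) (Fin N) K).mulVec (bv N j) = bv N a := by
  funext x
  simp only [Matrix.mulVec, dotProduct, Eu, bv, Matrix.of_apply]
  rw [Finset.sum_eq_single (⟨j-1, by omega⟩ : Fin N)]
  · simp only []
    have : (j - 1) + 1 = j := by omega
    simp [this]
  · intro y _ hy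
    have : (y:ℕ) + 1 ≠ j := by
      intro hc
      apply hy
      apply Fin.ext
      simp
      omega
    simp [this]
  · intro h; exact absurd (Finset.mem_univ _) h

lemma kron_mulVec {N : ℕ} (A B : Matrix (Fin N) (Fin N) K) (x y : Fin N → K) (p : Fin N × Fin N) :
    (A ⊗ₖ B).mulVec (fun q => x q.1 * y q.2) p = A.mulVec x p.1 * B.mulVec y p.2 := by
  simp only [Matrix.mulVec, dotProduct, Matrix.kroneckerMap_apply, Fintype.sum_prod_type]
  rw [Finset.sum_mul_sum]
  apply Finset.sum_congr rfl
  intro c _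
  apply Finset.sum_congr rfl
  intro d _
  ring

lemma mulVec_finset_sum {m : Type*} [Fintype m] (M : Matrix m m K) {ι : Type*} (S : Finset ι)
    (f : ι → m → K) :
    M.mulVec (∑ k ∈ S, f k) = ∑ k ∈ S, M.mulVec (f k) := by
  simpa only [Matrix.mulVecLin_apply] using map_sum M.mulVecLin f S

lemma sum_mulVec' {N : ℕ} {ι : Type*} (S : Finset ι) (f : ι → Matrix (Fin N) (Fin N) K)
    (v : Fin N → K) :
    (∑ k ∈ S, f k).mulVec v = ∑ k ∈ S, (f k).mulVec v := by
  funext x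
  simp only [Matrix.mulVec, dotProduct, Matrix.sum_apply, Finset.sum_mul, Finset.sum_apply]
  rw [Finset.sum_comm]


section
variable (n : ℕ) (r s : K)

lemma eD_lt_ip1 (i : ℕ) (h1 : 1 ≤ i) (h2 : i < n) :
    (eD n r s i).mulVec (bv (2*n) (i+1)) = bv (2*n) i := by
  rw [eD, if_neg (by omega), Matrix.sub_mulVec,
    Eu_mulVec_eq _ _ _ (by omega) (by omega),
    Eu_mulVec_ne _ _ _ _ (by simp only [pD]; omega), sub_zero]

lemma eD_lt_pDi (i : ℕ) (h1 : 1 ≤ i) (h2 : i < n) :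
    (eD n r s i).mulVec (bv (2*n) (pD n i)) = -(bv (2*n) (pD n (i+1))) := by
  rw [eD, if_neg (by omega), Matrix.sub_mulVec,
    Eu_mulVec_ne _ _ _ _ (by simp only [pD]; omega),
    Eu_mulVec_eq _ _ _ (by simp only [pD]; omega) (by simp only [pD]; omega)]
  simp

lemma eD_lt_zero (i j : ℕ) (h1 : 1 ≤ i) (h2 : i < n) (ha : j ≠ i+1) (hb : j ≠ pD n i) :
    (eD n r s i).mulVec (bv (2*n) j) = 0 := by
  rw [eD, if_neg (by omega), Matrix.sub_mulVec,
    Eu_mulVec_ne _ _ _ _ (Ne.symm ha), Eu_mulVec_ne _ _ _ _ (Ne.symm hb), sub_zero]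

lemma eD_n_pDn (hn : 2 ≤ n) :
    (eD n r s n).mulVec (bv (2*n) (pD n n)) = (r*s)⁻¹ • bv (2*n) (n-1) := by
  rw [eD, if_pos rfl, Matrix.sub_mulVec, Matrix.smul_mulVec,
    Eu_mulVec_eq _ _ _ (by simp only [pD]; omega) (by simp only [pD]; omega),
    Eu_mulVec_ne _ _ _ _ (by simp only [pD]; omega), sub_zero]

lemma eD_n_pDn1 (hn : 2 ≤ n) :
    (eD n r s n).mulVec (bv (2*n) (pD n (n-1))) = -(bv (2*n) n) := by
  rw [eD, if_pos rfl, Matrix.sub_mulVec, Matrix.smul_mulVec,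
    Eu_mulVec_ne _ _ _ _ (by simp only [pD]; omega),
    Eu_mulVec_eq _ _ _ (by simp only [pD]; omega) (by simp only [pD]; omega)]
  simp

lemma eD_n_zero (j : ℕ) (hn : 2 ≤ n) (ha : j ≠ pD n n) (hb : j ≠ pD n (n-1)) :
    (eD n r s n).mulVec (bv (2*n) j) = 0 := by
  rw [eD, if_pos rfl, Matrix.sub_mulVec, Matrix.smul_mulVec,
    Eu_mulVec_ne _ _ _ _ (Ne.symm ha), Eu_mulVec_ne _ _ _ _ (Ne.symm hb), smul_zero, sub_zero]

lemma ωD_lt_i (i : ℕ) (h1 : 1 ≤ i) (h2 : i < n) :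
    (ωD n r s i).mulVec (bv (2*n) i) = r • bv (2*n) i := by
  rw [ωD, if_neg (by omega)]
  simp only [Matrix.add_mulVec, Matrix.smul_mulVec]
  rw [Eu_mulVec_eq _ _ _ (by omega) (by omega),
    Eu_mulVec_ne _ _ _ _ (by omega),
    Eu_mulVec_ne _ _ _ _ (by simp only [pD]; omega),
    Eu_mulVec_ne _ _ _ _ (by simp only [pD]; omega),
    sum_mulVec', Finset.sum_eq_zero (fun j hj => by
      simp only [Finset.mem_filter, Finset.mem_Icc] at hj
      rw [Matrix.add_mulVec, Eu_mulVec_ne _ _ _ _ (by omega),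
        Eu_mulVec_ne _ _ _ _ (by simp only [pD]; omega), add_zero])]
  simp

lemma ωD_lt_pDi1 (i : ℕ) (h1 : 1 ≤ i) (h2 : i < n) :
    (ωD n r s i).mulVec (bv (2*n) (pD n (i+1))) = s⁻¹ • bv (2*n) (pD n (i+1)) := by
  rw [ωD, if_neg (by omega)]
  simp only [Matrix.add_mulVec, Matrix.smul_mulVec]
  rw [Eu_mulVec_ne _ _ _ _ (by simp only [pD]; omega),
    Eu_mulVec_ne _ _ _ _ (by simp only [pD]; omega),
    Eu_mulVec_ne _ _ _ _ (by simp only [pD]; omega),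
    Eu_mulVec_eq _ _ _ (by simp only [pD]; omega) (by simp only [pD]; omega),
    sum_mulVec', Finset.sum_eq_zero (fun j hj => by
      simp only [Finset.mem_filter, Finset.mem_Icc] at hj
      rw [Matrix.add_mulVec, Eu_mulVec_ne _ _ _ _ (by simp only [pD]; omega),
        Eu_mulVec_ne _ _ _ _ (by simp only [pD]; omega), add_zero])]
  simp

lemma ωD_n_n (hn : 2 ≤ n) :
    (ωD n r s n).mulVec (bv (2*n) n) = r • bv (2*n) n := by
  rw [ωD, if_pos rfl]
  simp only [Matrix.add_mulVec, Matrix.smul_mulVec]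
  rw [Eu_mulVec_ne _ _ _ _ (by omega),
    Eu_mulVec_eq _ _ _ (by omega) (by omega),
    Eu_mulVec_ne _ _ _ _ (by simp only [pD]; omega),
    Eu_mulVec_ne _ _ _ _ (by simp only [pD]; omega),
    sum_mulVec', Finset.sum_eq_zero (fun j hj => by
      simp only [Finset.mem_Icc] at hj
      rw [Matrix.add_mulVec, Matrix.smul_mulVec, Matrix.smul_mulVec,
        Eu_mulVec_ne _ _ _ _ (by omega),
        Eu_mulVec_ne _ _ _ _ (by simp only [pD]; omega), smul_zero, smul_zero, add_zero])]
  simp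

lemma ωD_n_nm1 (hn : 2 ≤ n) :
    (ωD n r s n).mulVec (bv (2*n) (n-1)) = s⁻¹ • bv (2*n) (n-1) := by
  rw [ωD, if_pos rfl]
  simp only [Matrix.add_mulVec, Matrix.smul_mulVec]
  rw [Eu_mulVec_eq _ _ _ (by omega) (by omega),
    Eu_mulVec_ne _ _ _ _ (by omega),
    Eu_mulVec_ne _ _ _ _ (by simp only [pD]; omega),
    Eu_mulVec_ne _ _ _ _ (by simp only [pD]; omega),
    sum_mulVec', Finset.sum_eq_zero (fun j hj => by
      simp only [Finset.mem_Icc] at hj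
      rw [Matrix.add_mulVec, Matrix.smul_mulVec, Matrix.smul_mulVec,
        Eu_mulVec_ne _ _ _ _ (by omega),
        Eu_mulVec_ne _ _ _ _ (by simp only [pD]; omega), smul_zero, smul_zero, add_zero])]
  simp

lemma kron_mulVec_bvv {N : ℕ} (A B : Matrix (Fin N) (Fin N) K) (a b : ℕ) (p : Fin N × Fin N) :
    (A ⊗ₖ B).mulVec (bvv N a b) p = A.mulVec (bv N a) p.1 * B.mulVec (bv N b) p.2 := by
  have : bvv N a b = (fun q : Fin N × Fin N => (bv N a q.1 * bv N b q.2 : K)) := rfl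
  rw [this, kron_mulVec]

lemma op_mulVec_bvv (i a b : ℕ) :
    (eD n r s i ⊗ₖ (1 : Matrix (Fin (2*n)) (Fin (2*n)) K)
      + ωD n r s i ⊗ₖ eD n r s i).mulVec (bvv (2*n) a b)
    = fun p => (eD n r s i).mulVec (bv (2*n) a) p.1 * bv (2*n) b p.2
        + (ωD n r s i).mulVec (bv (2*n) a) p.1 * (eD n r s i).mulVec (bv (2*n) b) p.2 := by
  funext p
  rw [Matrix.add_mulVec]
  simp only [Pi.add_apply]
  rw [kron_mulVec_bvv, kron_mulVec_bvv, Matrix.one_mulVec]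
end

theorem typeD_highest_weight_vectors
    (n : ℕ) (hn : 2 ≤ n) (r s : K) (hr : r ≠ 0) (hs : s ≠ 0) (hrs : r ^ 2 ≠ s ^ 2)
    (i : ℕ) (hi1 : 1 ≤ i) (hi2 : i ≤ n) :
    (eD n r s i ⊗ₖ (1 : Matrix (Fin (2 * n)) (Fin (2 * n)) K)
        + ωD n r s i ⊗ₖ eD n r s i).mulVec (bvv (2 * n) 1 1) = 0 ∧
    (eD n r s i ⊗ₖ (1 : Matrix (Fin (2 * n)) (Fin (2 * n)) K)
        + ωD n r s i ⊗ₖ eD n r s i).mulVec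
        (bvv (2 * n) 1 2 - r • bvv (2 * n) 2 1) = 0 ∧
    (eD n r s i ⊗ₖ (1 : Matrix (Fin (2 * n)) (Fin (2 * n)) K)
        + ωD n r s i ⊗ₖ eD n r s i).mulVec
        (∑ k ∈ Finset.Icc 1 n,
          ((r ^ (k - 1)) • bvv (2 * n) k (pD n k)
            + (r ^ (n - 1) * s ^ ((k : ℤ) - (n : ℤ))) • bvv (2 * n) (pD n k) k)) = 0 := by
  have he1 : (eD n r s i).mulVec (bv (2*n) 1) = 0 := by
    by_cases hin : i = n
    · rw [hin]; exact eD_n_zero n r s 1 hn (by simp only [pD]; omega) (by simp only [pD]; omega)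
    · exact eD_lt_zero n r s i 1 hi1 (by omega) (by omega) (by simp only [pD]; omega)
  refine ⟨?_, ?_, ?_⟩
  · rw [op_mulVec_bvv]
    funext p
    simp [he1]
  · rw [Matrix.mulVec_sub, Matrix.mulVec_smul, op_mulVec_bvv, op_mulVec_bvv]
    by_cases hI : i = 1
    · subst hI
      have he2 : (eD n r s 1).mulVec (bv (2*n) 2) = bv (2*n) 1 := by
        have := eD_lt_ip1 n r s 1 le_rfl (by omega)
        simpa using this
      have hw : (ωD n r s 1).mulVec (bv (2*n) 1) = r • bv (2*n) 1 :=
        ωD_lt_i n r s 1 le_rfl (by omega)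
      funext p
      simp only [Pi.sub_apply, Pi.smul_apply, Pi.zero_apply, smul_eq_mul, he1, he2, hw,
        mul_zero, zero_mul, add_zero, zero_add, mul_one]
      ring
    · have he2 : (eD n r s i).mulVec (bv (2*n) 2) = 0 := by
        by_cases hin : i = n
        · rw [hin]; exact eD_n_zero n r s 2 hn (by simp only [pD]; omega) (by simp only [pD]; omega)
        · exact eD_lt_zero n r s i 2 hi1 (by omega) (by omega) (by simp only [pD]; omega)
      funext p
      simp [he1, he2]
  · rw [mulVec_finset_sum]
    by_cases hin : i = n
    · rw [hin]
      have hm1 : n ∈ Finset.Icc 1 n := by simp; omega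
      have hm2 : n - 1 ∈ (Finset.Icc 1 n).erase n := by simp [Finset.mem_erase]; omega
      rw [← Finset.sum_erase_add _ _ hm1, ← Finset.sum_erase_add _ _ hm2]
      have hz : ∀ k ∈ ((Finset.Icc 1 n).erase n).erase (n-1),
          (eD n r s n ⊗ₖ (1 : Matrix (Fin (2 * n)) (Fin (2 * n)) K)
            + ωD n r s n ⊗ₖ eD n r s n).mulVec
            ((r ^ (k - 1)) • bvv (2 * n) k (pD n k)
              + (r ^ (n - 1) * s ^ ((k : ℤ) - (n : ℤ))) • bvv (2 * n) (pD n k) k) = 0 := by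
        intro k hk
        simp only [Finset.mem_erase, Finset.mem_Icc] at hk
        rw [Matrix.mulVec_add, Matrix.mulVec_smul, Matrix.mulVec_smul,
          op_mulVec_bvv, op_mulVec_bvv]
        have ha : (eD n r s n).mulVec (bv (2*n) k) = 0 :=
          eD_n_zero n r s k hn (by simp only [pD]; omega) (by simp only [pD]; omega)
        have hb : (eD n r s n).mulVec (bv (2*n) (pD n k)) = 0 :=
          eD_n_zero n r s (pD n k) hn (by simp only [pD]; omega) (by simp only [pD]; omega)
        funext p
        simp [ha, hb]
      rw [Finset.sum_eq_zero hz, zero_add]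
      rw [Matrix.mulVec_add, Matrix.mulVec_smul, Matrix.mulVec_smul,
        Matrix.mulVec_add, Matrix.mulVec_smul, Matrix.mulVec_smul,
        op_mulVec_bvv, op_mulVec_bvv, op_mulVec_bvv, op_mulVec_bvv]
      have ea : (eD n r s n).mulVec (bv (2*n) n) = 0 :=
        eD_n_zero n r s n hn (by simp only [pD]; omega) (by simp only [pD]; omega)
      have eb : (eD n r s n).mulVec (bv (2*n) (n-1)) = 0 :=
        eD_n_zero n r s (n-1) hn (by simp only [pD]; omega) (by simp only [pD]; omega)
      have ec : (eD n r s n).mulVec (bv (2*n) (pD n n)) = (r*s)⁻¹ • bv (2*n) (n-1) :=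
        eD_n_pDn n r s hn
      have ed : (eD n r s n).mulVec (bv (2*n) (pD n (n-1))) = -(bv (2*n) n) :=
        eD_n_pDn1 n r s hn
      have wa : (ωD n r s n).mulVec (bv (2*n) n) = r • bv (2*n) n := ωD_n_n n r s hn
      have wb : (ωD n r s n).mulVec (bv (2*n) (n-1)) = s⁻¹ • bv (2*n) (n-1) := ωD_n_nm1 n r s hn
      funext p
      simp only [Pi.add_apply, Pi.smul_apply, Pi.zero_apply, Pi.neg_apply, smul_eq_mul,
        ea, eb, ec, ed, wa, wb, mul_zero, zero_mul, add_zero, zero_add, mul_neg, neg_mul]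
      have hr' : r * r⁻¹ = 1 := mul_inv_cancel₀ hr
      have h1 : s ^ ((↑(n-1) : ℤ) - (n : ℤ)) = s⁻¹ := by
        rw [show ((n-1 : ℕ) : ℤ) - (n : ℤ) = -1 from by omega, _root_.zpow_neg_one]
      have h2 : s ^ ((n : ℤ) - (n : ℤ)) = (1 : K) := by simp
      have h3 : r ^ (n-1) = r ^ (n-1-1) * r := by
        rw [← pow_succ]; congr 1; omega
      rw [h1, h2, mul_inv]
      linear_combination (s⁻¹ * r⁻¹ * (bv (2*n) (n-1) p.1 * bv (2*n) n p.2)) * h3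
        + (r^(n-1-1) * s⁻¹ * (bv (2*n) (n-1) p.1 * bv (2*n) n p.2)) * hr'
        + (r^(n-1) * s⁻¹ * (bv (2*n) n p.1 * bv (2*n) (n-1) p.2)) * hr'
    · have hlt : i < n := by omega
      have hm1 : i + 1 ∈ Finset.Icc 1 n := by simp; omega
      have hm2 : i ∈ (Finset.Icc 1 n).erase (i+1) := by simp [Finset.mem_erase]; omega
      rw [← Finset.sum_erase_add _ _ hm1, ← Finset.sum_erase_add _ _ hm2]
      have hz : ∀ k ∈ ((Finset.Icc 1 n).erase (i+1)).erase i,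
          (eD n r s i ⊗ₖ (1 : Matrix (Fin (2 * n)) (Fin (2 * n)) K)
            + ωD n r s i ⊗ₖ eD n r s i).mulVec
            ((r ^ (k - 1)) • bvv (2 * n) k (pD n k)
              + (r ^ (n - 1) * s ^ ((k : ℤ) - (n : ℤ))) • bvv (2 * n) (pD n k) k) = 0 := by
        intro k hk
        simp only [Finset.mem_erase, Finset.mem_Icc] at hk
        rw [Matrix.mulVec_add, Matrix.mulVec_smul, Matrix.mulVec_smul,
          op_mulVec_bvv, op_mulVec_bvv]
        have ha : (eD n r s i).mulVec (bv (2*n) k) = 0 :=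
          eD_lt_zero n r s i k hi1 hlt (by omega) (by simp only [pD]; omega)
        have hb : (eD n r s i).mulVec (bv (2*n) (pD n k)) = 0 :=
          eD_lt_zero n r s i (pD n k) hi1 hlt (by simp only [pD]; omega) (by simp only [pD]; omega)
        funext p
        simp [ha, hb]
      rw [Finset.sum_eq_zero hz, zero_add]
      rw [Matrix.mulVec_add, Matrix.mulVec_smul, Matrix.mulVec_smul,
        Matrix.mulVec_add, Matrix.mulVec_smul, Matrix.mulVec_smul,
        op_mulVec_bvv, op_mulVec_bvv, op_mulVec_bvv, op_mulVec_bvv]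
      have ea : (eD n r s i).mulVec (bv (2*n) i) = 0 :=
        eD_lt_zero n r s i i hi1 hlt (by omega) (by simp only [pD]; omega)
      have eb : (eD n r s i).mulVec (bv (2*n) (pD n (i+1))) = 0 :=
        eD_lt_zero n r s i (pD n (i+1)) hi1 hlt (by simp only [pD]; omega) (by simp only [pD]; omega)
      have ec : (eD n r s i).mulVec (bv (2*n) (i+1)) = bv (2*n) i := eD_lt_ip1 n r s i hi1 hlt
      have ed : (eD n r s i).mulVec (bv (2*n) (pD n i)) = -(bv (2*n) (pD n (i+1))) :=
        eD_lt_pDi n r s i hi1 hlt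
      have wa : (ωD n r s i).mulVec (bv (2*n) i) = r • bv (2*n) i := ωD_lt_i n r s i hi1 hlt
      have wb : (ωD n r s i).mulVec (bv (2*n) (pD n (i+1))) = s⁻¹ • bv (2*n) (pD n (i+1)) :=
        ωD_lt_pDi1 n r s i hi1 hlt
      funext p
      simp only [Pi.add_apply, Pi.smul_apply, Pi.zero_apply, Pi.neg_apply, smul_eq_mul,
        ea, eb, ec, ed, wa, wb, mul_zero, zero_mul, add_zero, zero_add, mul_neg, neg_mul]
      have hc : r ^ (i+1-1) = r ^ (i-1) * r := by
        rw [show i+1-1 = (i-1)+1 from by omega, pow_succ]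
      have hd : s ^ ((↑(i+1) : ℤ) - (n : ℤ)) * s⁻¹ = s ^ ((i : ℤ) - (n : ℤ)) := by
        rw [show ((i+1 : ℕ) : ℤ) - (n : ℤ) = ((i : ℤ) - n) + 1 from by push_cast; ring,
          zpow_add_one₀ hs, mul_assoc, mul_inv_cancel₀ hs, mul_one]
      linear_combination (bv (2*n) i p.1 * bv (2*n) (pD n (i+1)) p.2) * hc
        + (r^(n-1) * (bv (2*n) (pD n (i+1)) p.1 * bv (2*n) i p.2)) * hd

end TwoParamQG
end

section
/- In type A_n (n ≥ 1), the operator-valued function R(z) := (1 − z rs^{−1}) Σ_{i=1}^{n+1} E_{ii}⊗E_{ii} + r(1 − z) Σ_{i>j} E_{ii}⊗E_{jj} + s^{−1}(1 − z) Σ_{i<j} E_{ii}⊗E_{jj} + (1 − rs^{−1}) Σ_{i>j} E_{ij}⊗E_{ji} + (1 − rs^{−1}) z Σ_{i<j} E_{ij}⊗E_{ji} satisfies the quantum Yang–Baxter equation with (multiplicative) spectral parameter: for all x, y ∈ K, R_{12}(x) R_{13}(xy) R_{23}(y) = R_{23}(y) R_{13}(xy) R_{12}(x) as operators on V ⊗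 V ⊗ V. -/
open Finset Matrix Kronecker
namespace TwoParamQG
variable {K : Type*} [Field K]

def Dc (r s z : K) {N : ℕ} (i j : Fin N) : K :=
  if i = j then 1 - z * r * s⁻¹ else if j < i then r * (1 - z) else s⁻¹ * (1 - z)

def Oc (r s z : K) {N : ℕ} (i j : Fin N) : K :=
  if i = j then 0 else if j < i then 1 - r * s⁻¹ else (1 - r * s⁻¹) * z

/-- The type `A_n` affine `R`-matrix `R(z)` on `K^{n+1} ⊗ K^{n+1}`. -/
def RA (n : ℕ) (r s z : K) : Matrix (Fin (n + 1) × Fin (n + 1)) (Fin (n + 1) × Fin (n + 1)) K :=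
  (1 - z * r * s⁻¹) • (∑ i ∈ Finset.Icc 1 (n + 1), Eu (n + 1) i i ⊗ₖ Eu (n + 1) i i)
  + (r * (1 - z)) • (∑ i ∈ Finset.Icc 1 (n + 1),
      ∑ j ∈ (Finset.Icc 1 (n + 1)).filter (fun j => j < i), Eu (n + 1) i i ⊗ₖ Eu (n + 1) j j)
  + (s⁻¹ * (1 - z)) • (∑ i ∈ Finset.Icc 1 (n + 1),
      ∑ j ∈ (Finset.Icc 1 (n + 1)).filter (fun j => i < j), Eu (n + 1) i i ⊗ₖ Eu (n + 1) j j)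
  + (1 - r * s⁻¹) • (∑ i ∈ Finset.Icc 1 (n + 1),
      ∑ j ∈ (Finset.Icc 1 (n + 1)).filter (fun j => j < i), Eu (n + 1) i j ⊗ₖ Eu (n + 1) j i)
  + ((1 - r * s⁻¹) * z) • (∑ i ∈ Finset.Icc 1 (n + 1),
      ∑ j ∈ (Finset.Icc 1 (n + 1)).filter (fun j => i < j), Eu (n + 1) i j ⊗ₖ Eu (n + 1) j i)

/-- The flip operator `P` on `V ⊗ V`. -/
def P12 (N : ℕ) : Matrix (Fin N × Fin N) (Fin N × Fin N) K :=
  Matrix.of fun p q => if p.1 = q.2 ∧ p.2 = q.1 then (1 : K) else 0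

lemma mem_Icc_fin {N : ℕ} (a : Fin N) : (a : ℕ) + 1 ∈ Finset.Icc 1 N := by
  simp [Nat.succ_le_of_lt a.isLt]

lemma collapse1 {N : ℕ} (a : Fin N) (F : ℕ → K) :
    (∑ t ∈ Finset.Icc 1 N, if (a : ℕ) + 1 = t then F t else 0) = F ((a : ℕ) + 1) := by
  rw [Finset.sum_ite_eq, if_pos (mem_Icc_fin a)]

lemma collapse2 {N : ℕ} (a b : Fin N) (S : ℕ → Finset ℕ) (F : ℕ → ℕ → K) :
    (∑ t ∈ Finset.Icc 1 N, ∑ u ∈ S t,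
        if ((a : ℕ) + 1 = t ∧ (b : ℕ) + 1 = u) then F t u else 0)
      = if (b : ℕ) + 1 ∈ S ((a : ℕ) + 1) then F ((a : ℕ) + 1) ((b : ℕ) + 1) else 0 := by
  have h1 : ∀ t, (∑ u ∈ S t, if ((a : ℕ) + 1 = t ∧ (b : ℕ) + 1 = u) then F t u else 0)
      = if (a : ℕ) + 1 = t then
          (if (b : ℕ) + 1 ∈ S t then F t ((b : ℕ) + 1) else 0) else 0 := by
    intro t
    by_cases h : (a : ℕ) + 1 = t
    · simp only [h, true_and, if_true, Finset.sum_ite_eq]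
    · simp [h]
  rw [Finset.sum_congr rfl fun t _ => h1 t, collapse1]

lemma RA_apply (n : ℕ) (r s z : K) (i j k l : Fin (n+1)) :
    RA n r s z (i, j) (k, l)
      = Dc r s z i j * (if (k, l) = (i, j) then 1 else 0)
        + Oc r s z i j * (if (k, l) = (j, i) then 1 else 0) := by
  have e1 : (∑ t ∈ Finset.Icc 1 (n+1),
      (Eu (n+1) t t ⊗ₖ Eu (n+1) t t : Matrix _ _ K) (i,j) (k,l))
      = if i = j ∧ k = i ∧ l = i then 1 else 0 := by
    have : ∀ t ∈ Finset.Icc 1 (n+1),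
        (Eu (n+1) t t ⊗ₖ Eu (n+1) t t : Matrix _ _ K) (i,j) (k,l)
        = if (i:ℕ)+1 = t then
            (if (j:ℕ)+1 = t ∧ (k:ℕ)+1 = t ∧ (l:ℕ)+1 = t then 1 else 0) else 0 := by
      intro t _
      simp only [kroneckerMap_apply, Eu, Matrix.of_apply, ite_and]
      split_ifs <;> simp_all
    rw [Finset.sum_congr rfl this, collapse1]
    have hc : ((j:ℕ)+1 = (i:ℕ)+1 ∧ (k:ℕ)+1 = (i:ℕ)+1 ∧ (l:ℕ)+1 = (i:ℕ)+1)
        ↔ (i = j ∧ k = i ∧ l = i) := by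
      simp only [Fin.ext_iff]; omega
    simp only [hc]
  have e2 : (∑ t ∈ Finset.Icc 1 (n+1), ∑ u ∈ (Finset.Icc 1 (n+1)).filter (fun u => u < t),
      (Eu (n+1) t t ⊗ₖ Eu (n+1) u u : Matrix _ _ K) (i,j) (k,l))
      = if j < i ∧ k = i ∧ l = j then 1 else 0 := by
    have hpt : ∀ t ∈ Finset.Icc 1 (n+1), ∀ u ∈ (Finset.Icc 1 (n+1)).filter (fun u => u < t),
        (Eu (n+1) t t ⊗ₖ Eu (n+1) u u : Matrix _ _ K) (i,j) (k,l)
        = if ((i:ℕ)+1 = t ∧ (j:ℕ)+1 = u) then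
            (if (k:ℕ)+1 = t ∧ (l:ℕ)+1 = u then 1 else 0) else 0 := by
      intro t _ u _
      simp only [kroneckerMap_apply, Eu, Matrix.of_apply]
      split_ifs <;> first | rfl | (exfalso; omega) | ring1
    rw [Finset.sum_congr rfl (fun t ht => Finset.sum_congr rfl (hpt t ht)), collapse2]
    have hc2 : ((k:ℕ)+1 = (i:ℕ)+1 ∧ (l:ℕ)+1 = (j:ℕ)+1) ↔ (k = i ∧ l = j) := by
      simp only [Fin.ext_iff]; omega
    have hm : ((j:ℕ)+1 ∈ (Finset.Icc 1 (n+1)).filter (fun u => u < (i:ℕ)+1)) ↔ j < i := by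
      have hj := j.isLt; have hi := i.isLt
      simp only [Finset.mem_filter, Finset.mem_Icc, Fin.lt_def]
      omega
    rw [← ite_and]
    exact if_congr (by rw [hm, hc2]) rfl rfl
  have e3 : (∑ t ∈ Finset.Icc 1 (n+1), ∑ u ∈ (Finset.Icc 1 (n+1)).filter (fun u => t < u),
      (Eu (n+1) t t ⊗ₖ Eu (n+1) u u : Matrix _ _ K) (i,j) (k,l))
      = if i < j ∧ k = i ∧ l = j then 1 else 0 := by
    have hpt : ∀ t ∈ Finset.Icc 1 (n+1), ∀ u ∈ (Finset.Icc 1 (n+1)).filter (fun u => t < u),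
        (Eu (n+1) t t ⊗ₖ Eu (n+1) u u : Matrix _ _ K) (i,j) (k,l)
        = if ((i:ℕ)+1 = t ∧ (j:ℕ)+1 = u) then
            (if (k:ℕ)+1 = t ∧ (l:ℕ)+1 = u then 1 else 0) else 0 := by
      intro t _ u _
      simp only [kroneckerMap_apply, Eu, Matrix.of_apply]
      split_ifs <;> first | rfl | (exfalso; omega) | ring1
    rw [Finset.sum_congr rfl (fun t ht => Finset.sum_congr rfl (hpt t ht)), collapse2]
    have hc2 : ((k:ℕ)+1 = (i:ℕ)+1 ∧ (l:ℕ)+1 = (j:ℕ)+1) ↔ (k = i ∧ l = j) := by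
      simp only [Fin.ext_iff]; omega
    have hm : ((j:ℕ)+1 ∈ (Finset.Icc 1 (n+1)).filter (fun u => (i:ℕ)+1 < u)) ↔ i < j := by
      have hj := j.isLt; have hi := i.isLt
      simp only [Finset.mem_filter, Finset.mem_Icc, Fin.lt_def]
      omega
    rw [← ite_and]
    exact if_congr (by rw [hm, hc2]) rfl rfl
  have e4 : (∑ t ∈ Finset.Icc 1 (n+1), ∑ u ∈ (Finset.Icc 1 (n+1)).filter (fun u => u < t),
      (Eu (n+1) t u ⊗ₖ Eu (n+1) u t : Matrix _ _ K) (i,j) (k,l))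
      = if j < i ∧ k = j ∧ l = i then 1 else 0 := by
    have hpt : ∀ t ∈ Finset.Icc 1 (n+1), ∀ u ∈ (Finset.Icc 1 (n+1)).filter (fun u => u < t),
        (Eu (n+1) t u ⊗ₖ Eu (n+1) u t : Matrix _ _ K) (i,j) (k,l)
        = if ((i:ℕ)+1 = t ∧ (j:ℕ)+1 = u) then
            (if (k:ℕ)+1 = u ∧ (l:ℕ)+1 = t then 1 else 0) else 0 := by
      intro t _ u _
      simp only [kroneckerMap_apply, Eu, Matrix.of_apply]
      split_ifs <;> first | rfl | (exfalso; omega) | ring1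
    rw [Finset.sum_congr rfl (fun t ht => Finset.sum_congr rfl (hpt t ht)), collapse2]
    have hc2 : ((k:ℕ)+1 = (j:ℕ)+1 ∧ (l:ℕ)+1 = (i:ℕ)+1) ↔ (k = j ∧ l = i) := by
      simp only [Fin.ext_iff]; omega
    have hm : ((j:ℕ)+1 ∈ (Finset.Icc 1 (n+1)).filter (fun u => u < (i:ℕ)+1)) ↔ j < i := by
      have hj := j.isLt; have hi := i.isLt
      simp only [Finset.mem_filter, Finset.mem_Icc, Fin.lt_def]
      omega
    rw [← ite_and]
    exact if_congr (by rw [hm, hc2]) rfl rfl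
  have e5 : (∑ t ∈ Finset.Icc 1 (n+1), ∑ u ∈ (Finset.Icc 1 (n+1)).filter (fun u => t < u),
      (Eu (n+1) t u ⊗ₖ Eu (n+1) u t : Matrix _ _ K) (i,j) (k,l))
      = if i < j ∧ k = j ∧ l = i then 1 else 0 := by
    have hpt : ∀ t ∈ Finset.Icc 1 (n+1), ∀ u ∈ (Finset.Icc 1 (n+1)).filter (fun u => t < u),
        (Eu (n+1) t u ⊗ₖ Eu (n+1) u t : Matrix _ _ K) (i,j) (k,l)
        = if ((i:ℕ)+1 = t ∧ (j:ℕ)+1 = u) then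
            (if (k:ℕ)+1 = u ∧ (l:ℕ)+1 = t then 1 else 0) else 0 := by
      intro t _ u _
      simp only [kroneckerMap_apply, Eu, Matrix.of_apply]
      split_ifs <;> first | rfl | (exfalso; omega) | ring1
    rw [Finset.sum_congr rfl (fun t ht => Finset.sum_congr rfl (hpt t ht)), collapse2]
    have hc2 : ((k:ℕ)+1 = (j:ℕ)+1 ∧ (l:ℕ)+1 = (i:ℕ)+1) ↔ (k = j ∧ l = i) := by
      simp only [Fin.ext_iff]; omega
    have hm : ((j:ℕ)+1 ∈ (Finset.Icc 1 (n+1)).filter (fun u => (i:ℕ)+1 < u)) ↔ i < j := by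
      have hj := j.isLt; have hi := i.isLt
      simp only [Finset.mem_filter, Finset.mem_Icc, Fin.lt_def]
      omega
    rw [← ite_and]
    exact if_congr (by rw [hm, hc2]) rfl rfl
  simp only [RA, Matrix.add_apply, Matrix.smul_apply, Matrix.sum_apply, smul_eq_mul]
  rw [e1, e2, e3, e4, e5]
  simp only [Dc, Oc, Prod.mk.injEq]
  by_cases h1 : k = i ∧ l = j
  · obtain ⟨rfl, rfl⟩ := h1
    rcases lt_trichotomy k l with h | h | h
    · simp [h, h.ne, h.ne', asymm h]
    · subst h; simp
    · simp [h, h.ne, h.ne', asymm h]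
  · by_cases h2 : k = j ∧ l = i
    · obtain ⟨rfl, rfl⟩ := h2
      have hij : l ≠ k := fun h => h1 ⟨h.symm, h⟩
      rcases lt_trichotomy l k with h | h | h
      · simp [h, h.ne, h.ne', asymm h, hij, hij.symm]
      · exact absurd h hij
      · simp [h, h.ne, h.ne', asymm h, hij, hij.symm]
    · have n1 : ¬(i = j ∧ k = i ∧ l = i) := fun ⟨hij, hk, hl⟩ => h1 ⟨hk, hl.trans hij⟩
      have n2 : ¬(j < i ∧ k = i ∧ l = j) := fun ⟨_, hk, hl⟩ => h1 ⟨hk, hl⟩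
      have n3 : ¬(i < j ∧ k = i ∧ l = j) := fun ⟨_, hk, hl⟩ => h1 ⟨hk, hl⟩
      have n4 : ¬(j < i ∧ k = j ∧ l = i) := fun ⟨_, hk, hl⟩ => h2 ⟨hk, hl⟩
      have n5 : ¬(i < j ∧ k = j ∧ l = i) := fun ⟨_, hk, hl⟩ => h2 ⟨hk, hl⟩
      rw [if_neg n1, if_neg n2, if_neg n3, if_neg n4, if_neg n5, if_neg h1, if_neg h2]
      ring


def del {ι : Type*} [DecidableEq ι] (q u : ι) : K := if q = u then 1 else 0

lemma sum_del {ι : Type*} [Fintype ι] [DecidableEq ι] (u v : ι) (c1 c2 : K) (h : ι → K) :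
    (∑ m, (c1 * del m u + c2 * del m v) * h m) = c1 * h u + c2 * h v := by
  simp only [del, add_mul, Finset.sum_add_distrib, mul_assoc, ite_mul, one_mul, zero_mul,
    mul_ite, mul_zero]
  rw [Finset.sum_ite_eq' Finset.univ u, Finset.sum_ite_eq' Finset.univ v]
  simp

/-- `R ↦ R₁₂ = R ⊗ Id` acting on `V ⊗ V ⊗ V`. -/
def lift12 {N : ℕ} (M : Matrix (Fin N × Fin N) (Fin N × Fin N) K) :
    Matrix (Fin N × Fin N × Fin N) (Fin N × Fin N × Fin N) K :=
  Matrix.of fun p q => M (p.1, p.2.1) (q.1, q.2.1) * (if p.2.2 = q.2.2 then (1 : K) else 0)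

/-- `R ↦ R₂₃ = Id ⊗ R` acting on `V ⊗ V ⊗ V`. -/
def lift23 {N : ℕ} (M : Matrix (Fin N × Fin N) (Fin N × Fin N) K) :
    Matrix (Fin N × Fin N × Fin N) (Fin N × Fin N × Fin N) K :=
  Matrix.of fun p q => (if p.1 = q.1 then (1 : K) else 0) * M p.2 q.2

/-- `R ↦ R₁₃ = (Id ⊗ P)(R ⊗ Id)(Id ⊗ P)` acting on `V ⊗ V ⊗ V`. -/
def lift13 {N : ℕ} (M : Matrix (Fin N × Fin N) (Fin N × Fin N) K) :
    Matrix (Fin N × Fin N × Fin N) (Fin N × Fin N × Fin N) K :=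
  Matrix.of fun p q => M (p.1, p.2.2) (q.1, q.2.2) * (if p.2.1 = q.2.1 then (1 : K) else 0)

lemma lift12_apply (n : ℕ) (r s z : K) (a b c : Fin (n+1))
    (q : Fin (n+1) × Fin (n+1) × Fin (n+1)) :
    lift12 (RA n r s z) (a, b, c) q
      = Dc r s z a b * del q (a, b, c) + Oc r s z a b * del q (b, a, c) := by
  obtain ⟨d, e, f⟩ := q
  simp only [lift12, Matrix.of_apply, RA_apply, del, Prod.mk.injEq]
  by_cases hab : a = b
  · subst hab
    simp only [Oc, if_pos, lt_irrefl, ite_true, mul_zero, zero_mul, add_zero, zero_add]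
    split_ifs <;> first | ring1 | (exfalso; simp only [Fin.ext_iff] at *; omega) | (exfalso; simp only [Fin.ext_iff] at *)
  · replace hab : ¬ ((a:ℕ) = (b:ℕ)) := by simpa [Fin.ext_iff] using hab
    split_ifs <;> first | ring1 | (exfalso; simp only [Fin.ext_iff] at *; omega) | (exfalso; simp only [Fin.ext_iff] at *)

lemma lift23_apply (n : ℕ) (r s z : K) (a b c : Fin (n+1))
    (q : Fin (n+1) × Fin (n+1) × Fin (n+1)) :
    lift23 (RA n r s z) (a, b, c) q
      = Dc r s z b c * del q (a, b, c) + Oc r s z b c * del q (a, c, b) := by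
  obtain ⟨d, e, f⟩ := q
  simp only [lift23, Matrix.of_apply, RA_apply, del, Prod.mk.injEq]
  by_cases hab : b = c
  · subst hab
    simp only [Oc, if_pos, lt_irrefl, ite_true, mul_zero, zero_mul, add_zero, zero_add]
    split_ifs <;> first | ring1 | (exfalso; simp only [Fin.ext_iff] at *; omega) | (exfalso; simp only [Fin.ext_iff] at *)
  · replace hab : ¬ ((b:ℕ) = (c:ℕ)) := by simpa [Fin.ext_iff] using hab
    split_ifs <;> first | ring1 | (exfalso; simp only [Fin.ext_iff] at *; omega) | (exfalso; simp only [Fin.ext_iff] at *)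

lemma lift13_apply (n : ℕ) (r s z : K) (a b c : Fin (n+1))
    (q : Fin (n+1) × Fin (n+1) × Fin (n+1)) :
    lift13 (RA n r s z) (a, b, c) q
      = Dc r s z a c * del q (a, b, c) + Oc r s z a c * del q (c, b, a) := by
  obtain ⟨d, e, f⟩ := q
  simp only [lift13, Matrix.of_apply, RA_apply, del, Prod.mk.injEq]
  by_cases hab : a = c
  · subst hab
    simp only [Oc, if_pos, lt_irrefl, ite_true, mul_zero, zero_mul, add_zero, zero_add]
    split_ifs <;> first | ring1 | (exfalso; simp only [Fin.ext_iff] at *; omega) | (exfalso; simp only [Fin.ext_iff] at *)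
  · replace hab : ¬ ((a:ℕ) = (c:ℕ)) := by simpa [Fin.ext_iff] using hab
    split_ifs <;> first | ring1 | (exfalso; simp only [Fin.ext_iff] at *; omega) | (exfalso; simp only [Fin.ext_iff] at *)

lemma expand12 (n : ℕ) (r s z : K) (a b c : Fin (n+1))
    (A : Matrix (Fin (n+1) × Fin (n+1) × Fin (n+1)) (Fin (n+1) × Fin (n+1) × Fin (n+1)) K)
    (q : Fin (n+1) × Fin (n+1) × Fin (n+1)) :
    (lift12 (RA n r s z) * A) (a, b, c) q
      = Dc r s z a b * A (a, b, c) q + Oc r s z a b * A (b, a, c) q := by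
  rw [Matrix.mul_apply, Finset.sum_congr rfl (fun m _ => by rw [lift12_apply]), sum_del]

lemma expand23 (n : ℕ) (r s z : K) (a b c : Fin (n+1))
    (A : Matrix (Fin (n+1) × Fin (n+1) × Fin (n+1)) (Fin (n+1) × Fin (n+1) × Fin (n+1)) K)
    (q : Fin (n+1) × Fin (n+1) × Fin (n+1)) :
    (lift23 (RA n r s z) * A) (a, b, c) q
      = Dc r s z b c * A (a, b, c) q + Oc r s z b c * A (a, c, b) q := by
  rw [Matrix.mul_apply, Finset.sum_congr rfl (fun m _ => by rw [lift23_apply]), sum_del]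

lemma expand13 (n : ℕ) (r s z : K) (a b c : Fin (n+1))
    (A : Matrix (Fin (n+1) × Fin (n+1) × Fin (n+1)) (Fin (n+1) × Fin (n+1) × Fin (n+1)) K)
    (q : Fin (n+1) × Fin (n+1) × Fin (n+1)) :
    (lift13 (RA n r s z) * A) (a, b, c) q
      = Dc r s z a c * A (a, b, c) q + Oc r s z a c * A (c, b, a) q := by
  rw [Matrix.mul_apply, Finset.sum_congr rfl (fun m _ => by rw [lift13_apply]), sum_del]


lemma Dc_eq {N : ℕ} (r s z : K) (i : Fin N) : Dc r s z i i = 1 - z * r * s⁻¹ := by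
  simp [Dc]

lemma Dc_lt {N : ℕ} (r s z : K) {i j : Fin N} (h : i < j) : Dc r s z i j = s⁻¹ * (1 - z) := by
  simp [Dc, h.ne, asymm h]

lemma Dc_gt {N : ℕ} (r s z : K) {i j : Fin N} (h : j < i) : Dc r s z i j = r * (1 - z) := by
  simp [Dc, h.ne', h]

lemma Oc_eq {N : ℕ} (r s z : K) (i : Fin N) : Oc r s z i i = 0 := by
  simp [Oc]

lemma Oc_lt {N : ℕ} (r s z : K) {i j : Fin N} (h : i < j) : Oc r s z i j = (1 - r * s⁻¹) * z := by
  simp [Oc, h.ne, asymm h]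

lemma Oc_gt {N : ℕ} (r s z : K) {i j : Fin N} (h : j < i) : Oc r s z i j = 1 - r * s⁻¹ := by
  simp [Oc, h.ne', h]

set_option maxHeartbeats 2000000 in
theorem typeA_affine_YangBaxter
    (n : ℕ) (hn : 1 ≤ n) (r s : K) (hr : r ≠ 0) (hs : s ≠ 0) (hrs : r ^ 2 ≠ s ^ 2) (x y : K) :
    lift12 (RA n r s x) * lift13 (RA n r s (x * y)) * lift23 (RA n r s y)
      = lift23 (RA n r s y) * lift13 (RA n r s (x * y)) * lift12 (RA n r s x) := by
  clear hn hr hs hrs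
  ext ⟨a, b, c⟩ q
  rw [Matrix.mul_assoc, Matrix.mul_assoc]
  simp only [expand12, expand23, expand13, lift23_apply, lift12_apply]
  rcases lt_trichotomy a b with hab | hab | hab
  · rcases lt_trichotomy b c with hbc | hbc | hbc
    · have hac : a < c := hab.trans hbc
      simp only [Dc_lt r s _ hab, Oc_lt r s _ hab, Dc_lt r s _ hbc, Oc_lt r s _ hbc,
        Dc_lt r s _ hac, Oc_lt r s _ hac, Dc_gt r s _ hab, Oc_gt r s _ hab,
        Dc_gt r s _ hbc, Oc_gt r s _ hbc, Dc_gt r s _ hac, Oc_gt r s _ hac]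
      simp only [del]; split_ifs <;> first | ring1 | (exfalso; simp only [Prod.mk.injEq, Fin.ext_iff, Fin.lt_def] at *; omega) | (exfalso; simp only [Prod.mk.injEq, Fin.ext_iff, Fin.lt_def] at *)
    · subst hbc
      simp only [Dc_lt r s _ hab, Oc_lt r s _ hab, Dc_gt r s _ hab, Oc_gt r s _ hab,
        Dc_eq, Oc_eq]
      simp only [del]; split_ifs <;> first | ring1 | (exfalso; simp only [Prod.mk.injEq, Fin.ext_iff, Fin.lt_def] at *; omega) | (exfalso; simp only [Prod.mk.injEq, Fin.ext_iff, Fin.lt_def] at *)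
    · rcases lt_trichotomy a c with hac | hac | hac
      · simp only [Dc_lt r s _ hab, Oc_lt r s _ hab, Dc_lt r s _ hac, Oc_lt r s _ hac,
          Dc_gt r s _ hab, Oc_gt r s _ hab, Dc_gt r s _ hac, Oc_gt r s _ hac,
          Dc_lt r s _ hbc, Oc_lt r s _ hbc, Dc_gt r s _ hbc, Oc_gt r s _ hbc]
        simp only [del]; split_ifs <;> first | ring1 | (exfalso; simp only [Prod.mk.injEq, Fin.ext_iff, Fin.lt_def] at *; omega) | (exfalso; simp only [Prod.mk.injEq, Fin.ext_iff, Fin.lt_def] at *)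
      · subst hac
        simp only [Dc_lt r s _ hab, Oc_lt r s _ hab, Dc_gt r s _ hab, Oc_gt r s _ hab,
          Dc_lt r s _ hbc, Oc_lt r s _ hbc, Dc_gt r s _ hbc, Oc_gt r s _ hbc,
          Dc_eq, Oc_eq]
        simp only [del]; split_ifs <;> first | ring1 | (exfalso; simp only [Prod.mk.injEq, Fin.ext_iff, Fin.lt_def] at *; omega) | (exfalso; simp only [Prod.mk.injEq, Fin.ext_iff, Fin.lt_def] at *)
      · simp only [Dc_lt r s _ hab, Oc_lt r s _ hab, Dc_lt r s _ hbc, Oc_lt r s _ hbc,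
          Dc_gt r s _ hab, Oc_gt r s _ hab, Dc_gt r s _ hbc, Oc_gt r s _ hbc,
          Dc_lt r s _ hac, Oc_lt r s _ hac, Dc_gt r s _ hac, Oc_gt r s _ hac]
        simp only [del]; split_ifs <;> first | ring1 | (exfalso; simp only [Prod.mk.injEq, Fin.ext_iff, Fin.lt_def] at *; omega) | (exfalso; simp only [Prod.mk.injEq, Fin.ext_iff, Fin.lt_def] at *)
  · subst hab
    rcases lt_trichotomy a c with hac | hac | hac
    · simp only [Dc_lt r s _ hac, Oc_lt r s _ hac, Dc_gt r s _ hac, Oc_gt r s _ hac,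
        Dc_eq, Oc_eq]
      simp only [del]; split_ifs <;> first | ring1 | (exfalso; simp only [Prod.mk.injEq, Fin.ext_iff, Fin.lt_def] at *; omega) | (exfalso; simp only [Prod.mk.injEq, Fin.ext_iff, Fin.lt_def] at *)
    · subst hac
      simp only [Dc_eq, Oc_eq]
      simp only [del]; split_ifs <;> first | ring1 | (exfalso; simp only [Prod.mk.injEq, Fin.ext_iff, Fin.lt_def] at *; omega) | (exfalso; simp only [Prod.mk.injEq, Fin.ext_iff, Fin.lt_def] at *)
    · simp only [Dc_lt r s _ hac, Oc_lt r s _ hac, Dc_gt r s _ hac, Oc_gt r s _ hac,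
        Dc_eq, Oc_eq]
      simp only [del]; split_ifs <;> first | ring1 | (exfalso; simp only [Prod.mk.injEq, Fin.ext_iff, Fin.lt_def] at *; omega) | (exfalso; simp only [Prod.mk.injEq, Fin.ext_iff, Fin.lt_def] at *)
  · rcases lt_trichotomy b c with hbc | hbc | hbc
    · rcases lt_trichotomy a c with hac | hac | hac
      · simp only [Dc_lt r s _ hbc, Oc_lt r s _ hbc, Dc_gt r s _ hbc, Oc_gt r s _ hbc,
          Dc_lt r s _ hac, Oc_lt r s _ hac, Dc_gt r s _ hac, Oc_gt r s _ hac,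
          Dc_lt r s _ hab, Oc_lt r s _ hab, Dc_gt r s _ hab, Oc_gt r s _ hab]
        simp only [del]; split_ifs <;> first | ring1 | (exfalso; simp only [Prod.mk.injEq, Fin.ext_iff, Fin.lt_def] at *; omega) | (exfalso; simp only [Prod.mk.injEq, Fin.ext_iff, Fin.lt_def] at *)
      · subst hac
        simp only [Dc_lt r s _ hbc, Oc_lt r s _ hbc, Dc_gt r s _ hbc, Oc_gt r s _ hbc,
          Dc_lt r s _ hab, Oc_lt r s _ hab, Dc_gt r s _ hab, Oc_gt r s _ hab,
          Dc_eq, Oc_eq]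
        simp only [del]; split_ifs <;> first | ring1 | (exfalso; simp only [Prod.mk.injEq, Fin.ext_iff, Fin.lt_def] at *; omega) | (exfalso; simp only [Prod.mk.injEq, Fin.ext_iff, Fin.lt_def] at *)
      · simp only [Dc_lt r s _ hbc, Oc_lt r s _ hbc, Dc_gt r s _ hbc, Oc_gt r s _ hbc,
          Dc_lt r s _ hac, Oc_lt r s _ hac, Dc_gt r s _ hac, Oc_gt r s _ hac,
          Dc_lt r s _ hab, Oc_lt r s _ hab, Dc_gt r s _ hab, Oc_gt r s _ hab]
        simp only [del]; split_ifs <;> first | ring1 | (exfalso; simp only [Prod.mk.injEq, Fin.ext_iff, Fin.lt_def] at *; omega) | (exfalso; simp only [Prod.mk.injEq, Fin.ext_iff, Fin.lt_def] at *)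
    · subst hbc
      simp only [Dc_gt r s _ hab, Oc_gt r s _ hab, Dc_lt r s _ hab, Oc_lt r s _ hab,
        Dc_eq, Oc_eq]
      simp only [del]; split_ifs <;> first | ring1 | (exfalso; simp only [Prod.mk.injEq, Fin.ext_iff, Fin.lt_def] at *; omega) | (exfalso; simp only [Prod.mk.injEq, Fin.ext_iff, Fin.lt_def] at *)
    · have hac : c < a := hbc.trans hab
      simp only [Dc_gt r s _ hab, Oc_gt r s _ hab, Dc_gt r s _ hbc, Oc_gt r s _ hbc,
        Dc_gt r s _ hac, Oc_gt r s _ hac, Dc_lt r s _ hab, Oc_lt r s _ hab,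
        Dc_lt r s _ hbc, Oc_lt r s _ hbc, Dc_lt r s _ hac, Oc_lt r s _ hac]
      simp only [del]; split_ifs <;> first | ring1 | (exfalso; simp only [Prod.mk.injEq, Fin.ext_iff, Fin.lt_def] at *; omega) | (exfalso; simp only [Prod.mk.injEq, Fin.ext_iff, Fin.lt_def] at *)

end TwoParamQG
end
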